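/- Let f : 𝔹 → 𝔹 be a regular homeomorphism of Sobolev class W^{1,1}_loc possessing Lusin's (N)-property, and let p > 1. Then for almost all r ∈ [0,1], S'(r) ≥ L(r)^p / ((2πr)^{p-1} d_p(r)), where L(r) denotes the length of the curve f(re^{iθ}), 0 ≤ θ ≤ 2π. -/

import Mathlib

open MeasureTheory Filter Metric Set
open scoped Real Topology

noncomputable section

/-- The Jacobian determinant of `f : ℂ → ℂ` at `z` (via the a.e. existing total derivative). -/
def jacobian (f : ℂ → ℂ) (z : ℂ) : ℝ := (fderiv ℝ f z).det

/-- The angular partial derivative `f_θ` of `f` at `z = r e^{iθ}`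
(the derivative of `θ ↦ f (r e^{iθ})`). -/
def angDeriv (f : ℂ → ℂ) (z : ℂ) : ℂ := fderiv ℝ f z (Complex.I * z)

/-- The radial partial derivative `f_r` of `f` at `z = r e^{iθ}`. -/
def radDeriv (f : ℂ → ℂ) (z : ℂ) : ℂ := fderiv ℝ f z (z / ((‖z‖ : ℝ) : ℂ))

/-- The `p`-angular dilatation `D_p(z) = |f_θ|^p / (r^p J_f)` of `f` at `z`
with respect to the origin. -/
def angDil (f : ℂ → ℂ) (p : ℝ) (z : ℂ) : ℝ :=
  ‖angDeriv f z‖ ^ p / (‖z‖ ^ p * jacobian f z)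

/-- `q_p(r) = ((1/(2πr)) ∫_{γ_r} Q^{1/(p-1)} |dz|)^{p-1}`, written via the arclength
parametrization of the circle `γ_r`. -/
def circMean (Q : ℂ → ℝ) (p : ℝ) (r : ℝ) : ℝ :=
  ((2 * Real.pi)⁻¹ * ∫ θ in (0:ℝ)..(2 * Real.pi),
    Q ((r : ℂ) * Complex.exp (Complex.I * (θ : ℂ))) ^ (1 / (p - 1))) ^ (p - 1)

/-- `d_p(r)`: the quantity `q_p(r)` for `Q = D_p`. -/
def dMean (f : ℂ → ℂ) (p : ℝ) (r : ℝ) : ℝ := circMean (angDil f p) p r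

/-- `S(r) = m(f(B_r))`, the area of the image of the disc of radius `r`. -/
def areaFn (f : ℂ → ℂ) (r : ℝ) : ℝ := (volume (f '' ball (0:ℂ) r)).toReal

/-- `L(r)`: the length of the curve `θ ↦ f(re^{iθ})`, `0 ≤ θ ≤ 2π`. -/
def curveLen (f : ℂ → ℂ) (r : ℝ) : ℝ :=
  ∫ θ in (0:ℝ)..(2 * Real.pi),
    ‖angDeriv f ((r : ℂ) * Complex.exp (Complex.I * (θ : ℂ)))‖

/-- A regular homeomorphism of the unit disc onto itself of Sobolev class `W^{1,1}_loc`
possessing Lusin's (N)-property: a sense-preserving homeomorphism `𝔹 → 𝔹`,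
differentiable a.e. with (positive, by sense-preservation) non-vanishing Jacobian a.e.,
with locally integrable differential, mapping null subsets of `𝔹` onto null sets. -/
def IsRegularHomeo (f : ℂ → ℂ) : Prop :=
  (∃ e : (ball (0:ℂ) 1) ≃ₜ (ball (0:ℂ) 1), ∀ z : (ball (0:ℂ) 1), (e z : ℂ) = f z) ∧
  (∀ᵐ z ∂(volume.restrict (ball (0:ℂ) 1)), DifferentiableAt ℝ f z ∧ 0 < jacobian f z) ∧
  LocallyIntegrableOn (fun z => ‖fderiv ℝ f z‖) (ball (0:ℂ) 1) volume ∧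
  (∀ s, s ⊆ ball (0:ℂ) 1 → volume s = 0 → volume (f '' s) = 0)

open scoped ENNReal

/-!
By the area formula, which holds for injective a.e. differentiable maps with Lusin's
(N)-property, and polar coordinates, `S(r) = ∫₀ʳ Φ(s) ds` with
`Φ(s) = s ∫₀^{2π} |J_f(s e^{iθ})| dθ`, so Lebesgue's differentiation theorem gives `S'(r) = Φ(r)`
for a.e. `r`. For a.e. `r` also `J_f > 0` a.e. on `γ_r`, where `|f_θ|^p = (r^p J_f) D_p`, and
Hölder's inequality with exponents `p` and `p / (p - 1)` yields
`L(r)^p ≤ r^p (∫ J_f dθ) (∫ D_p^{1/(p-1)} dθ)^{p-1}`, which rearranges to the claim.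
-/

theorem Complex.polarCoord_symm_eq_circleMap (p : ℝ × ℝ) :
    Complex.polarCoord.symm p = circleMap 0 p.1 p.2 := by
  simp [circleMap, Complex.exp_mul_I, ← Complex.ofReal_cos, ← Complex.ofReal_sin]

theorem measurable_circleMap_zero_uncurry :
    Measurable fun q : ℝ × ℝ => circleMap 0 q.1 q.2 := by
  unfold circleMap; fun_prop

theorem Function.Periodic.setLIntegral_Ioc_add_eq {g : ℝ → ℝ≥0∞} {T : ℝ} [Fact (0 < T)]
    (hg : Function.Periodic g T) (s t : ℝ) :
    ∫⁻ θ in Ioc s (s + T), g θ = ∫⁻ θ in Ioc t (t + T), g θ := by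
  have h : ∀ θ : ℝ, g θ = hg.lift (θ : AddCircle T) := fun θ => (hg.lift_coe θ).symm
  simp only [h, AddCircle.lintegral_preimage]

theorem lintegral_eq_lintegral_Ioi_circleMap {g : ℂ → ℝ≥0∞} (hg : Measurable g) :
    ∫⁻ z, g z = ∫⁻ s in Ioi 0, ENNReal.ofReal s *
      ∫⁻ θ in Ioc 0 (2 * π), g (circleMap 0 s θ) := by
  have hmeas : Measurable fun q : ℝ × ℝ => ENNReal.ofReal q.1 * g (circleMap 0 q.1 q.2) :=
    measurable_fst.ennreal_ofReal.mul (hg.comp measurable_circleMap_zero_uncurry)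
  rw [← Complex.lintegral_comp_polarCoord_symm, polarCoord_target,
    Measure.volume_eq_prod, ← Measure.prod_restrict]
  simp only [Complex.polarCoord_symm_eq_circleMap, smul_eq_mul]
  rw [lintegral_prod _ hmeas.aemeasurable]
  refine setLIntegral_congr_fun measurableSet_Ioi fun s _ => ?_
  have hper : Function.Periodic (fun θ => g (circleMap 0 s θ)) (2 * π) :=
    fun θ => by simp only [periodic_circleMap 0 s θ]
  have : Fact (0 < 2 * π) := ⟨Real.two_pi_pos⟩
  have hshift := hper.setLIntegral_Ioc_add_eq (-π) 0
  rw [zero_add, neg_add_eq_sub, sub_eq_iff_eq_add.mpr (two_mul π)] at hshift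
  rw [lintegral_const_mul' _ _ ENNReal.ofReal_ne_top, setLIntegral_congr Ioo_ae_eq_Ioc]
  exact congrArg _ hshift

theorem setLIntegral_ball_eq_lintegral_Ioo_circleMap {g : ℂ → ℝ≥0∞} (hg : Measurable g) (r : ℝ) :
    ∫⁻ z in ball 0 r, g z = ∫⁻ s in Ioo 0 r, ENNReal.ofReal s *
      ∫⁻ θ in Ioc 0 (2 * π), g (circleMap 0 s θ) := by
  rw [← lintegral_indicator measurableSet_ball,
    lintegral_eq_lintegral_Ioi_circleMap (hg.indicator measurableSet_ball),
    ← Ioi_inter_Iio, inter_comm, ← Measure.restrict_restrict measurableSet_Iio,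
    ← lintegral_indicator measurableSet_Iio]
  refine setLIntegral_congr_fun measurableSet_Ioi fun s hs => ?_
  have hmem : ∀ θ, circleMap 0 s θ ∈ ball (0 : ℂ) r ↔ s ∈ Iio r := fun θ => by
    rw [mem_ball_zero_iff, norm_circleMap_zero, abs_of_pos hs, mem_Iio]
  by_cases hsr : s ∈ Iio r
  · simp [indicator_of_mem, hmem, hsr]
  · simp [indicator_of_notMem, hmem, hsr]

theorem ae_ae_circleMap_of_ae_restrict_ball {P : ℂ → Prop} {r : ℝ}
    (h : ∀ᵐ z ∂volume.restrict (ball 0 r), P z) :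
    ∀ᵐ s ∂volume.restrict (Ioo 0 r), ∀ᵐ θ ∂volume.restrict (Ioc 0 (2 * π)),
      P (circleMap 0 s θ) := by
  set N := toMeasurable (volume.restrict (ball 0 r)) {z | ¬P z}
  have hN : MeasurableSet N := measurableSet_toMeasurable _ _
  have hind : Measurable (N.indicator (1 : ℂ → ℝ≥0∞)) := measurable_one.indicator hN
  have hmeas : Measurable fun s : ℝ =>
      ENNReal.ofReal s * ∫⁻ θ in Ioc 0 (2 * π), N.indicator 1 (circleMap 0 s θ) :=
    measurable_id.ennreal_ofReal.mul
      (hind.comp measurable_circleMap_zero_uncurry).lintegral_prod_right'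
  have hzero : ∫⁻ z in ball 0 r, N.indicator 1 z = 0 := by
    rw [lintegral_indicator_one hN, measure_toMeasurable]
    exact ae_iff.mp h
  rw [setLIntegral_ball_eq_lintegral_Ioo_circleMap hind,
    lintegral_eq_zero_iff hmeas] at hzero
  filter_upwards [hzero, ae_restrict_mem measurableSet_Ioo] with s hs hsr
  have hslice : Measurable fun θ => N.indicator 1 (circleMap 0 s θ) :=
    hind.comp (continuous_circleMap 0 s).measurable
  rw [Pi.zero_apply, mul_eq_zero, ENNReal.ofReal_eq_zero, lintegral_eq_zero_iff hslice] at hs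
  filter_upwards [hs.resolve_left (not_le.mpr hsr.1)] with θ hθ
  by_contra hP
  simp only [Pi.zero_apply, indicator_apply_eq_zero, Pi.one_apply, one_ne_zero] at hθ
  exact hθ (subset_toMeasurable _ _ hP)

theorem addHaar_image_eq_lintegral_abs_det_fderiv_of_ae_differentiableAt
    {E : Type*} [NormedAddCommGroup E] [NormedSpace ℝ E] [FiniteDimensional ℝ E]
    [MeasurableSpace E] [BorelSpace E] (μ : Measure E) [μ.IsAddHaarMeasure]
    {f : E → E} {s : Set E} (hs : MeasurableSet s) (hinj : InjOn f s)
    (hdiff : ∀ᵐ x ∂μ.restrict s, DifferentiableAt ℝ f x)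
    (hN : ∀ t ⊆ s, μ t = 0 → μ (f '' t) = 0) :
    μ (f '' s) = ∫⁻ x in s, ENNReal.ofReal |(fderiv ℝ f x).det| ∂μ := by
  set D := {x | DifferentiableAt ℝ f x}
  have hD : MeasurableSet D := measurableSet_of_differentiableAt ℝ f
  have hnull : μ (s ∩ Dᶜ) = 0 := by
    rw [inter_comm, ← Measure.restrict_apply hD.compl]
    exact ae_iff.mp hdiff
  have himage : μ (f '' s) = μ (f '' (s ∩ D)) := by
    refine le_antisymm ?_ (measure_mono (image_mono inter_subset_left))
    calc μ (f '' s) = μ (f '' (s ∩ D) ∪ f '' (s \ D)) := by rw [← image_union, inter_union_sdiff]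
      _ ≤ μ (f '' (s ∩ D)) + μ (f '' (s \ D)) := measure_union_le _ _
      _ = μ (f '' (s ∩ D)) := by rw [hN _ sdiff_subset hnull, add_zero]
  rw [himage, ← lintegral_abs_det_fderiv_eq_addHaar_image μ (hs.inter hD)
    (fun x hx => hx.2.hasFDerivAt.hasFDerivWithinAt) (hinj.mono inter_subset_left)]
  exact setLIntegral_congr (sdiff_compl (s := s) ▸ sdiff_ae_eq_self.mpr hnull)

theorem ae_hasDerivAt_toReal_setLIntegral_Ioo {φ : ℝ → ℝ≥0∞} (hφ : Measurable φ) {a b : ℝ}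
    (hfin : ∫⁻ s in Ioo a b, φ s ≠ ∞) :
    ∀ᵐ x ∂volume.restrict (Ioo a b),
      HasDerivAt (fun x => (∫⁻ s in Ioo a x, φ s).toReal) (φ x).toReal x := by
  rcases le_or_gt b a with hba | hab
  · simp [Ioo_eq_empty hba.not_gt]
  have hint : IntervalIntegrable (fun s => (φ s).toReal) volume a b :=
    (intervalIntegrable_iff_integrableOn_Ioo_of_le hab.le).mpr
      (integrable_toReal_of_lintegral_ne_top hφ.aemeasurable hfin)
  have hlt : ∀ᵐ s ∂volume.restrict (Ioo a b), φ s < ∞ := ae_lt_top hφ hfin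
  have hprim : EqOn (fun y => (∫⁻ s in Ioo a y, φ s).toReal)
      (fun y => ∫ s in a..y, (φ s).toReal) (Ioo a b) := fun y hy => by
    dsimp only
    rw [intervalIntegral.integral_of_le hy.1.le, integral_Ioc_eq_integral_Ioo,
      integral_toReal hφ.aemeasurable
        (ae_restrict_of_ae_restrict_of_subset (Ioo_subset_Ioo_right hy.2.le) hlt)]
  filter_upwards [ae_restrict_of_ae hint.ae_hasDerivAt_integral,
    ae_restrict_mem measurableSet_Ioo] with x hx hxab
  exact (hx (Ioo_subset_Icc_self.trans Icc_subset_uIcc hxab) a left_mem_uIcc).congr_of_eventuallyEq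
    (hprim.eventuallyEq_of_mem (Ioo_mem_nhds hxab.1 hxab.2))

section Holder

variable {α : Type*} [MeasurableSpace α] {μ : Measure α} {p : ℝ}

theorem ENNReal.lintegral_rpow_le_of_rpow_eq_mul (hp : 1 < p) {a u v : α → ℝ≥0∞}
    (hu : AEMeasurable u μ) (hv : AEMeasurable v μ) (h : ∀ᵐ x ∂μ, a x ^ p = u x * v x) :
    (∫⁻ x, a x ∂μ) ^ p ≤ (∫⁻ x, u x ∂μ) * (∫⁻ x, v x ^ (1 / (p - 1)) ∂μ) ^ (p - 1) := by
  have hp0 : 0 < p := zero_lt_one.trans hp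
  have hp1 : 0 < p - 1 := sub_pos.mpr hp
  have ha : ∀ᵐ x ∂μ, a x = u x ^ (1 / p) * (v x ^ (1 / (p - 1))) ^ ((p - 1) / p) := by
    filter_upwards [h] with x hx
    rw [← ENNReal.rpow_mul, show 1 / (p - 1) * ((p - 1) / p) = 1 / p by field_simp,
      ← ENNReal.mul_rpow_of_nonneg _ _ (by positivity), ← hx, ← ENNReal.rpow_mul,
      mul_one_div_cancel hp0.ne', ENNReal.rpow_one]
  calc (∫⁻ x, a x ∂μ) ^ p
      = (∫⁻ x, u x ^ (1 / p) * (v x ^ (1 / (p - 1))) ^ ((p - 1) / p) ∂μ) ^ p := by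
        rw [lintegral_congr_ae ha]
    _ ≤ ((∫⁻ x, u x ∂μ) ^ (1 / p) * (∫⁻ x, v x ^ (1 / (p - 1)) ∂μ) ^ ((p - 1) / p)) ^ p :=
        ENNReal.rpow_le_rpow (lintegral_mul_norm_pow_le hu (hv.pow_const _) (by positivity)
          (by positivity) (by field_simp; ring)) hp0.le
    _ = (∫⁻ x, u x ∂μ) * (∫⁻ x, v x ^ (1 / (p - 1)) ∂μ) ^ (p - 1) := by
        rw [ENNReal.mul_rpow_of_nonneg _ _ hp0.le, ← ENNReal.rpow_mul, ← ENNReal.rpow_mul,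
          one_div_mul_cancel hp0.ne', div_mul_cancel₀ _ hp0.ne', ENNReal.rpow_one]

theorem integral_rpow_le_of_rpow_eq_mul (hp : 1 < p) {a u v : α → ℝ}
    (ha : 0 ≤ᵐ[μ] a) (hu : 0 ≤ᵐ[μ] u) (hv : 0 ≤ᵐ[μ] v) (hu_int : Integrable u μ)
    (hv_int : Integrable (fun x => v x ^ (1 / (p - 1))) μ) (hvm : AEMeasurable v μ)
    (h : ∀ᵐ x ∂μ, a x ^ p = u x * v x) :
    (∫ x, a x ∂μ) ^ p ≤ (∫ x, u x ∂μ) * (∫ x, v x ^ (1 / (p - 1)) ∂μ) ^ (p - 1) := by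
  have hp0 : 0 < p := zero_lt_one.trans hp
  have hv_nn : 0 ≤ᵐ[μ] fun x => v x ^ (1 / (p - 1)) := by
    filter_upwards [hv] with x hx using Real.rpow_nonneg hx _
  have hofReal : ∀ᵐ x ∂μ,
      ENNReal.ofReal (a x) ^ p = ENNReal.ofReal (u x) * ENNReal.ofReal (v x) := by
    filter_upwards [ha, hu, h] with x hax hux hx
    rw [ENNReal.ofReal_rpow_of_nonneg hax hp0.le, hx, ENNReal.ofReal_mul hux]
  have hpow : ∀ᵐ x ∂μ,
      ENNReal.ofReal (v x) ^ (1 / (p - 1)) = ENNReal.ofReal (v x ^ (1 / (p - 1))) := by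
    filter_upwards [hv] with x hx
    exact ENNReal.ofReal_rpow_of_nonneg hx (by have := sub_pos.mpr hp; positivity)
  have key := ENNReal.lintegral_rpow_le_of_rpow_eq_mul hp hu_int.aemeasurable.ennreal_ofReal
    hvm.ennreal_ofReal hofReal
  rw [lintegral_congr_ae hpow, ← ofReal_integral_eq_lintegral_ofReal hu_int hu,
    ← ofReal_integral_eq_lintegral_ofReal hv_int hv_nn,
    ENNReal.ofReal_rpow_of_nonneg (integral_nonneg_of_ae hv_nn) (sub_pos.mpr hp).le,
    ← ENNReal.ofReal_mul (integral_nonneg_of_ae hu)] at key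
  have hrhs : 0 ≤ (∫ x, u x ∂μ) * (∫ x, v x ^ (1 / (p - 1)) ∂μ) ^ (p - 1) :=
    mul_nonneg (integral_nonneg_of_ae hu) (Real.rpow_nonneg (integral_nonneg_of_ae hv_nn) _)
  by_cases ha_int : Integrable a μ
  · rw [← ofReal_integral_eq_lintegral_ofReal ha_int ha,
      ENNReal.ofReal_rpow_of_nonneg (integral_nonneg_of_ae ha) hp0.le] at key
    exact (ENNReal.ofReal_le_ofReal_iff hrhs).mp key
  · rwa [integral_undef ha_int, Real.zero_rpow hp0.ne']

end Holder

theorem measurable_jacobian (f : ℂ → ℂ) : Measurable (jacobian f) :=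
  ContinuousLinearMap.continuous_det.measurable.comp (measurable_fderiv ℝ f)

theorem measurable_angDeriv (f : ℂ → ℂ) : Measurable (angDeriv f) :=
  isBoundedBilinearMap_apply.continuous.measurable.comp
    ((measurable_fderiv ℝ f).prodMk (measurable_const.mul measurable_id))

theorem measurable_angDil (f : ℂ → ℂ) (p : ℝ) : Measurable (angDil f p) :=
  ((measurable_angDeriv f).norm.pow_const p).div
    ((measurable_norm.pow_const p).mul (measurable_jacobian f))

theorem curveLen_eq_setIntegral (f : ℂ → ℂ) (r : ℝ) :
    curveLen f r = ∫ θ in Ioc 0 (2 * π), ‖angDeriv f (circleMap 0 r θ)‖ := by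
  rw [curveLen, intervalIntegral.integral_of_le Real.two_pi_pos.le]
  simp_rw [circleMap_zero, mul_comm _ Complex.I]

theorem dMean_eq_setIntegral (f : ℂ → ℂ) (p r : ℝ) :
    dMean f p r = ((2 * π)⁻¹ *
      ∫ θ in Ioc 0 (2 * π), angDil f p (circleMap 0 r θ) ^ (1 / (p - 1))) ^ (p - 1) := by
  rw [dMean, circMean, intervalIntegral.integral_of_le Real.two_pi_pos.le]
  simp_rw [circleMap_zero, mul_comm _ Complex.I]

def circleJacobianIntegral (f : ℂ → ℂ) (s : ℝ) : ℝ≥0∞ :=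
  ENNReal.ofReal s * ∫⁻ θ in Ioc 0 (2 * π), ENNReal.ofReal |jacobian f (circleMap 0 s θ)|

theorem measurable_circleJacobianIntegral (f : ℂ → ℂ) :
    Measurable (circleJacobianIntegral f) :=
  measurable_id.ennreal_ofReal.mul
    (((measurable_jacobian f).abs.ennreal_ofReal).comp
      measurable_circleMap_zero_uncurry).lintegral_prod_right'

theorem measurable_abs_jacobian_circleMap (f : ℂ → ℂ) (r : ℝ) :
    Measurable fun θ => |jacobian f (circleMap 0 r θ)| :=
  (measurable_jacobian f).abs.comp (continuous_circleMap 0 r).measurable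

theorem toReal_circleJacobianIntegral (f : ℂ → ℂ) {r : ℝ} (hr : 0 ≤ r) :
    (circleJacobianIntegral f r).toReal =
      r * ∫ θ in Ioc 0 (2 * π), |jacobian f (circleMap 0 r θ)| := by
  rw [circleJacobianIntegral, ENNReal.toReal_mul, ENNReal.toReal_ofReal hr,
    integral_eq_lintegral_of_nonneg_ae (ae_of_all _ fun _ => abs_nonneg _)
      (measurable_abs_jacobian_circleMap f r).aestronglyMeasurable]

theorem integrableOn_abs_jacobian_circleMap {f : ℂ → ℂ} {r : ℝ} (hr : 0 < r)
    (hfin : circleJacobianIntegral f r ≠ ∞) :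
    IntegrableOn (fun θ => |jacobian f (circleMap 0 r θ)|) (Ioc 0 (2 * π)) := by
  have hne : ∫⁻ θ in Ioc 0 (2 * π), ENNReal.ofReal |jacobian f (circleMap 0 r θ)| ≠ ∞ :=
    fun h => hfin <| by
      rw [circleJacobianIntegral, h, ENNReal.mul_top (ENNReal.ofReal_pos.mpr hr).ne']
  exact (integrable_toReal_of_lintegral_ne_top
    (measurable_abs_jacobian_circleMap f r).ennreal_ofReal.aemeasurable hne).congr
      (ae_of_all _ fun _ => ENNReal.toReal_ofReal (abs_nonneg _))

theorem curveLen_rpow_div_le_circleJacobianIntegral {f : ℂ → ℂ} {p r : ℝ} (hp : 1 < p)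
    (hr : 0 < r) (hJ : ∀ᵐ θ ∂volume.restrict (Ioc 0 (2 * π)), 0 < jacobian f (circleMap 0 r θ))
    (hfin : circleJacobianIntegral f r ≠ ∞) :
    curveLen f r ^ p / ((2 * π * r) ^ (p - 1) * dMean f p r) ≤
      (circleJacobianIntegral f r).toReal := by
  set μ := volume.restrict (Ioc 0 (2 * π))
  set J : ℝ → ℝ := fun θ => |jacobian f (circleMap 0 r θ)|
  set D : ℝ → ℝ := fun θ => angDil f p (circleMap 0 r θ)
  set m := ∫ θ, D θ ^ (1 / (p - 1)) ∂μ
  have hJint : Integrable J μ := integrableOn_abs_jacobian_circleMap hr hfin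
  have hΦ : (circleJacobianIntegral f r).toReal = r * ∫ θ, J θ ∂μ :=
    toReal_circleJacobianIntegral f hr.le
  have hD0 : 0 ≤ᵐ[μ] D := by
    filter_upwards [hJ] with θ hθ
    exact div_nonneg (Real.rpow_nonneg (norm_nonneg _) _)
      (mul_nonneg (Real.rpow_nonneg (norm_nonneg _) _) hθ.le)
  have hpow : ∀ᵐ θ ∂μ, ‖angDeriv f (circleMap 0 r θ)‖ ^ p = r ^ p * J θ * D θ := by
    filter_upwards [hJ] with θ hθ
    simp only [D, J, angDil, norm_circleMap_zero, abs_of_pos hr, abs_of_pos hθ]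
    field_simp
  have hm0 : 0 ≤ m := integral_nonneg_of_ae (hD0.mono fun θ h => Real.rpow_nonneg h _)
  have hden : (2 * π * r) ^ (p - 1) * ((2 * π)⁻¹ * m) ^ (p - 1) = r ^ (p - 1) * m ^ (p - 1) := by
    rw [← Real.mul_rpow (by positivity) (by positivity), ← Real.mul_rpow hr.le hm0]
    congr 1
    field_simp
  have hrp : r ^ p = r * r ^ (p - 1) := by rw [Real.rpow_sub_one hr.ne', mul_div_cancel₀ _ hr.ne']
  rw [curveLen_eq_setIntegral, dMean_eq_setIntegral, hΦ, hden]
  by_cases hm_int : Integrable (fun θ => D θ ^ (1 / (p - 1))) μ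
  · refine div_le_of_le_mul₀ (by positivity) (by positivity) ?_
    calc (∫ θ, ‖angDeriv f (circleMap 0 r θ)‖ ∂μ) ^ p
        ≤ (∫ θ, r ^ p * J θ ∂μ) * m ^ (p - 1) :=
          integral_rpow_le_of_rpow_eq_mul hp (ae_of_all _ fun _ => norm_nonneg _)
            (ae_of_all _ fun _ => by positivity) hD0 (hJint.const_mul _) hm_int
            ((measurable_angDil f p).comp (continuous_circleMap 0 r).measurable).aemeasurable hpow
      _ = r * (∫ θ, J θ ∂μ) * (r ^ (p - 1) * m ^ (p - 1)) := by
          rw [integral_const_mul, hrp]; ring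
  -- otherwise `d_p(r)` is the junk value `0`, and so is the left-hand side
  · rw [show m = 0 from integral_undef hm_int, Real.zero_rpow (sub_pos.mpr hp).ne', mul_zero,
      div_zero]
    positivity

namespace IsRegularHomeo

variable {f : ℂ → ℂ}

theorem injOn (hf : IsRegularHomeo f) : InjOn f (ball 0 1) := by
  obtain ⟨⟨e, he⟩, -⟩ := hf
  intro z hz w hw hzw
  simpa using e.injective (Subtype.ext (by rw [he, he, hzw] : (e ⟨z, hz⟩ : ℂ) = e ⟨w, hw⟩))

theorem mapsTo (hf : IsRegularHomeo f) : MapsTo f (ball 0 1) (ball 0 1) := by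
  obtain ⟨⟨e, he⟩, -⟩ := hf
  exact fun z hz => he ⟨z, hz⟩ ▸ (e ⟨z, hz⟩).2

theorem volume_image_ball (hf : IsRegularHomeo f) {r : ℝ} (hr : r ≤ 1) :
    volume (f '' ball 0 r) = ∫⁻ s in Ioo 0 r, circleJacobianIntegral f s := by
  have hsub : ball (0 : ℂ) r ⊆ ball 0 1 := ball_subset_ball hr
  rw [addHaar_image_eq_lintegral_abs_det_fderiv_of_ae_differentiableAt volume measurableSet_ball
      (hf.injOn.mono hsub) (ae_restrict_of_ae_restrict_of_subset hsub (hf.2.1.mono fun _ h => h.1))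
      (fun t ht => hf.2.2.2 t (ht.trans hsub))]
  exact setLIntegral_ball_eq_lintegral_Ioo_circleMap (measurable_jacobian f).abs.ennreal_ofReal r

theorem lintegral_circleJacobianIntegral_ne_top (hf : IsRegularHomeo f) :
    ∫⁻ s in Ioo 0 1, circleJacobianIntegral f s ≠ ∞ := by
  rw [← hf.volume_image_ball le_rfl]
  exact (measure_mono hf.mapsTo.image_subset).trans_lt measure_ball_lt_top |>.ne

theorem ae_hasDerivAt_areaFn (hf : IsRegularHomeo f) :
    ∀ᵐ r ∂volume.restrict (Ioo 0 1),
      HasDerivAt (areaFn f) (circleJacobianIntegral f r).toReal r := by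
  filter_upwards [ae_hasDerivAt_toReal_setLIntegral_Ioo (measurable_circleJacobianIntegral f)
      hf.lintegral_circleJacobianIntegral_ne_top, ae_restrict_mem measurableSet_Ioo] with r hr hr01
  refine hr.congr_of_eventuallyEq (eventually_of_mem (Iio_mem_nhds hr01.2) fun s hs => ?_)
  rw [areaFn, hf.volume_image_ball (le_of_lt hs)]

end IsRegularHomeo

/-- `S'(r) ≥ L(r)^p / ((2πr)^{p-1} d_p(r))` for a.a. `r ∈ [0,1]`. -/
theorem area_deriv_length_bound (f : ℂ → ℂ) (hf : IsRegularHomeo f) (p : ℝ) (hp : 1 < p) :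
    ∀ᵐ r ∂(volume.restrict (Icc (0:ℝ) 1)),
      deriv (areaFn f) r ≥
        curveLen f r ^ p / ((2 * Real.pi * r) ^ (p - 1) * dMean f p r) := by
  rw [ae_restrict_congr_set Ioo_ae_eq_Icc.symm]
  filter_upwards [hf.ae_hasDerivAt_areaFn, ae_ae_circleMap_of_ae_restrict_ball hf.2.1,
    ae_lt_top (measurable_circleJacobianIntegral f) hf.lintegral_circleJacobianIntegral_ne_top,
    ae_restrict_mem measurableSet_Ioo] with r hderiv hslice hfin hr
  rw [ge_iff_le, hderiv.deriv]
  exact curveLen_rpow_div_le_circleJacobianIntegral hp hr.1 (hslice.mono fun _ h => h.2) hfin.ne
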